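/- For k ∈ ℕ, the polynomial P_k(x) = (−1)^k ∫_0^∞ e^{−t} L_k(2t + 2x) dt has the explicit expansion P_k(x) = Σ_{m=0}^{k} (x^m / m!) · Σ_{l=m}^{k} 2^l (−1)^{k−l} C(k,l). -/

import Mathlib

open MeasureTheory Real

/-- The classical Laguerre polynomial `L_k(x) = ∑_{l=0}^{k} ((-1)^l / l!) C(k,l) x^l`. -/
noncomputable def laguerre (k : ℕ) (x : ℝ) : ℝ :=
  ∑ l ∈ Finset.range (k + 1), ((-1 : ℝ) ^ l / l.factorial) * (k.choose l) * x ^ l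

/-- `P_k(x) = (-1)^k ∫_0^∞ e^{-t} L_k(2t + 2x) dt`. -/
noncomputable def laguerreP (k : ℕ) (x : ℝ) : ℝ :=
  (-1 : ℝ) ^ k * ∫ t in Set.Ioi (0 : ℝ), Real.exp (-t) * laguerre k (2 * t + 2 * x)

/-! Expanding `(t + x)^l` binomially and integrating `∫_0^∞ e^{-t} t^j dt = j!` term by term
gives `∫_0^∞ e^{-t} (t + x)^l dt = l! ∑_{m ≤ l} x^m / m!`. Since `L_k(2t + 2x)` is
`∑_l (-2)^l C(k,l) (t + x)^l / l!`, the factorials cancel, and exchanging the sums over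
`m ≤ l ≤ k` gives the expansion. -/

lemma integrableOn_exp_neg_mul_pow (n : ℕ) :
    IntegrableOn (fun t : ℝ => exp (-t) * t ^ n) (Set.Ioi 0) :=
  (GammaIntegral_convergent (s := n + 1) (by positivity)).congr_fun
    (fun t _ => by simp only [add_sub_cancel_right, rpow_natCast, mul_comm]) measurableSet_Ioi

lemma integral_exp_neg_mul_pow (n : ℕ) :
    ∫ t in Set.Ioi (0 : ℝ), exp (-t) * t ^ n = n.factorial := by
  rw [← Gamma_nat_eq_factorial, Gamma_eq_integral (by positivity)]
  refine setIntegral_congr_fun measurableSet_Ioi (fun t _ => ?_)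
  simp only [add_sub_cancel_right, rpow_natCast, mul_comm]

lemma exp_neg_mul_add_pow (x t : ℝ) (l : ℕ) :
    exp (-t) * (t + x) ^ l
      = ∑ m ∈ Finset.range (l + 1), (x ^ m * l.choose m) * (exp (-t) * t ^ (l - m)) := by
  rw [add_comm t, add_pow, Finset.mul_sum]
  exact Finset.sum_congr rfl fun m _ => by ring

lemma integrableOn_exp_neg_mul_add_pow (x : ℝ) (l : ℕ) :
    IntegrableOn (fun t : ℝ => exp (-t) * (t + x) ^ l) (Set.Ioi 0) := by
  simp_rw [exp_neg_mul_add_pow x]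
  exact integrable_finsetSum _ fun m _ => (integrableOn_exp_neg_mul_pow _).const_mul _

lemma integral_exp_neg_mul_add_pow (x : ℝ) (l : ℕ) :
    ∫ t in Set.Ioi (0 : ℝ), exp (-t) * (t + x) ^ l
      = l.factorial * ∑ m ∈ Finset.range (l + 1), x ^ m / m.factorial := by
  simp_rw [exp_neg_mul_add_pow x]
  rw [integral_finsetSum _ fun m _ => (integrableOn_exp_neg_mul_pow _).const_mul _,
    Finset.mul_sum]
  refine Finset.sum_congr rfl fun m hm => ?_
  have hml : m ≤ l := Nat.lt_succ_iff.mp (Finset.mem_range.mp hm)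
  rw [integral_const_mul, integral_exp_neg_mul_pow,
    ← Nat.choose_mul_factorial_mul_factorial hml]
  push_cast
  field_simp

lemma laguerre_two_mul_add (k : ℕ) (t x : ℝ) :
    laguerre k (2 * t + 2 * x)
      = ∑ l ∈ Finset.range (k + 1), ((-2 : ℝ) ^ l / l.factorial * k.choose l) * (t + x) ^ l := by
  refine Finset.sum_congr rfl fun l _ => ?_
  rw [← mul_add, mul_pow, neg_pow (2 : ℝ)]
  ring

lemma integral_exp_neg_mul_laguerre (k : ℕ) (x : ℝ) :
    ∫ t in Set.Ioi (0 : ℝ), exp (-t) * laguerre k (2 * t + 2 * x)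
      = ∑ l ∈ Finset.range (k + 1), ∑ m ∈ Finset.range (l + 1),
          (-2 : ℝ) ^ l * k.choose l * (x ^ m / m.factorial) := by
  simp_rw [laguerre_two_mul_add, Finset.mul_sum, mul_left_comm (exp _)]
  rw [integral_finsetSum _ fun l _ => (integrableOn_exp_neg_mul_add_pow x l).const_mul _]
  refine Finset.sum_congr rfl fun l _ => ?_
  rw [integral_const_mul, integral_exp_neg_mul_add_pow, Finset.mul_sum, Finset.mul_sum]
  refine Finset.sum_congr rfl fun m _ => ?_
  field_simp

lemma neg_one_pow_mul_neg_pow {R : Type*} [CommRing R] (a : R) {k l : ℕ} (h : l ≤ k) :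
    (-1 : R) ^ k * (-a) ^ l = a ^ l * (-1) ^ (k - l) := by
  have hsq : (-1 : R) ^ l * (-1) ^ l = 1 := by rw [← mul_pow, neg_one_mul, neg_neg, one_pow]
  rw [neg_pow a, ← Nat.sub_add_cancel h, pow_add, Nat.add_sub_cancel]
  linear_combination ((-1 : R) ^ (k - l) * a ^ l) * hsq

theorem laguerreP_expansion (k : ℕ) (x : ℝ) :
    laguerreP k x
      = ∑ m ∈ Finset.range (k + 1), (x ^ m / m.factorial) *
          ∑ l ∈ Finset.Icc m k, (2 : ℝ) ^ l * (-1 : ℝ) ^ (k - l) * (k.choose l) := by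
  simp_rw [laguerreP, integral_exp_neg_mul_laguerre, Finset.mul_sum]
  rw [Finset.sum_comm' (t' := Finset.range (k + 1)) (s' := fun m => Finset.Icc m k)
    fun l m => by simp only [Finset.mem_range, Finset.mem_Icc]; omega]
  refine Finset.sum_congr rfl fun m _ => Finset.sum_congr rfl fun l hl => ?_
  linear_combination (k.choose l * (x ^ m / m.factorial)) *
    neg_one_pow_mul_neg_pow (2 : ℝ) (Finset.mem_Icc.mp hl).2
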